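/- Let P₀ and P₁ be two Borel probability measures on ℝ^m. If the sigmoid IPM d_sig(P₀,P₁) = 0, then for every bounded measurable function g : ℝ^m → ℝ one has ∫ g dP₀ = ∫ g dP₁; in particular, for any prediction model f and any function φ : ℝ → ℝ with φ∘f bounded measurable, the φ-fairness |∫ φ(f(z)) dP₀(z) − ∫ φ(f(z)) dP₁(z)| equals 0. -/

import Mathlib

open MeasureTheory

/-- The sigmoid function `σ(t) = 1/(1 + e^{-t})`. -/
noncomputable def sigmoid (t : ℝ) : ℝ := 1 / (1 + Real.exp (-t))

/-- The sigmoid IPM between two measures on `ℝ^m`. -/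
noncomputable def sigmoidIPM {m : ℕ} (P₀ P₁ : Measure (Fin m → ℝ)) : ℝ :=
  ⨆ p : (Fin m → ℝ) × ℝ,
    |(∫ z, sigmoid ((∑ i, p.1 i * z i) + p.2) ∂P₀) -
      ∫ z, sigmoid ((∑ i, p.1 i * z i) + p.2) ∂P₁|

/-!
A vanishing sigmoid IPM forces `P₀ = P₁`. First, `∫ σ(a x + b)` over the image of `P₀` or `P₁`
under a linear functional `z ↦ θᵀz` is an instance of the sigmoid integrals in the IPM, so the
two images agree on all of them. Along `σ(n (n (x - t) + 1)) → 𝟙[t, ∞)(x)`, dominated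
convergence turns this into equality on all half-lines `[t, ∞)`, hence equality of the images.
Finally, finite measures on `ℝ^m` with the same one-dimensional projections have the same
characteristic function and are therefore equal (Cramér–Wold).
-/

open Filter Set Topology

theorem sigmoid_eq_real_sigmoid : sigmoid = Real.sigmoid := by
  funext t
  rw [sigmoid, Real.sigmoid_def, one_div]

theorem norm_integral_sigmoid_le {α : Type*} [MeasurableSpace α] (μ : Measure α)
    [IsFiniteMeasure μ] (g : α → ℝ) : ‖∫ x, Real.sigmoid (g x) ∂μ‖ ≤ μ.real univ := by
  refine (norm_integral_le_of_norm_le_const (ae_of_all _ fun x => ?_)).trans_eq (one_mul _)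
  rw [Real.norm_of_nonneg (Real.sigmoid_nonneg _)]
  exact Real.sigmoid_le_one _

-- The `+ 1` sends the value at `x = t` to `1` rather than to `σ 0 = 1/2`.
theorem tendsto_sigmoid_indicator_Ici (t x : ℝ) :
    Tendsto (fun n : ℕ => Real.sigmoid (n * (n * (x - t) + 1))) atTop
      (𝓝 ((Ici t).indicator 1 x)) := by
  have hn : Tendsto (fun n : ℕ => (n : ℝ)) atTop atTop := tendsto_natCast_atTop_atTop
  rcases lt_or_ge x t with hxt | htx
  · rw [indicator_of_notMem (show x ∉ Ici t from not_le.mpr hxt)]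
    refine Real.tendsto_sigmoid_atBot.comp (hn.atTop_mul_atBot₀ ?_)
    exact tendsto_atBot_add_const_right _ 1 (hn.atTop_mul_const_of_neg (sub_neg.mpr hxt))
  · rw [indicator_of_mem (show x ∈ Ici t from htx), Pi.one_apply]
    refine Real.tendsto_sigmoid_atTop.comp (tendsto_atTop_mono (fun n => ?_) hn)
    have : 0 ≤ (n : ℝ) * (x - t) := mul_nonneg n.cast_nonneg (sub_nonneg.mpr htx)
    nlinarith

theorem tendsto_integral_sigmoid_measureReal_Ici (ν : Measure ℝ) [IsFiniteMeasure ν] (t : ℝ) :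
    Tendsto (fun n : ℕ => ∫ x, Real.sigmoid (n * (n * (x - t) + 1)) ∂ν) atTop
      (𝓝 (ν.real (Ici t))) := by
  rw [← integral_indicator_one measurableSet_Ici]
  refine tendsto_integral_of_dominated_convergence (fun _ => 1) (fun n => ?_)
    (integrable_const 1) (fun n => ae_of_all _ fun x => ?_)
    (ae_of_all _ (tendsto_sigmoid_indicator_Ici t))
  · exact (continuous_sigmoid.comp (by fun_prop)).aestronglyMeasurable
  · rw [Real.norm_of_nonneg (Real.sigmoid_nonneg _)]
    exact Real.sigmoid_le_one _

theorem MeasureTheory.Measure.ext_of_integral_sigmoid_eq (ν₀ ν₁ : Measure ℝ) [IsFiniteMeasure ν₀]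
    [IsFiniteMeasure ν₁]
    (h : ∀ a b : ℝ, ∫ x, Real.sigmoid (a * x + b) ∂ν₀ = ∫ x, Real.sigmoid (a * x + b) ∂ν₁) :
    ν₀ = ν₁ := by
  refine Measure.ext_of_Ici ν₀ ν₁ fun t => ?_
  have hlim := tendsto_integral_sigmoid_measureReal_Ici ν₀ t
  have hrw : ∀ (n : ℕ) (x : ℝ), (n : ℝ) * (n * (x - t) + 1) = n * n * x + (n - n * n * t) :=
    fun n x => by ring
  simp_rw [hrw, h, ← hrw] at hlim
  exact (measureReal_eq_measureReal_iff (measure_ne_top _ _) (measure_ne_top _ _)).mp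
    (tendsto_nhds_unique hlim (tendsto_integral_sigmoid_measureReal_Ici ν₁ t))

theorem MeasureTheory.Measure.ext_of_forall_map_strongDual {E : Type*} [NormedAddCommGroup E]
    [NormedSpace ℝ E] [CompleteSpace E] [MeasurableSpace E] [BorelSpace E]
    [SecondCountableTopology E] {μ ν : Measure E} [IsFiniteMeasure μ] [IsFiniteMeasure ν]
    (h : ∀ L : StrongDual ℝ E, μ.map L = ν.map L) : μ = ν :=
  Measure.ext_of_charFunDual <| funext fun L => by
    rw [charFunDual_eq_charFun_map_one, charFunDual_eq_charFun_map_one, h]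

theorem integral_sigmoid_eq_of_sigmoidIPM_eq_zero {m : ℕ} {P₀ P₁ : Measure (Fin m → ℝ)}
    [IsFiniteMeasure P₀] [IsFiniteMeasure P₁] (h : sigmoidIPM P₀ P₁ = 0) (θ : Fin m → ℝ)
    (b : ℝ) :
    ∫ z, sigmoid ((∑ i, θ i * z i) + b) ∂P₀ = ∫ z, sigmoid ((∑ i, θ i * z i) + b) ∂P₁ := by
  have hbdd : BddAbove (range fun p : (Fin m → ℝ) × ℝ =>
      |(∫ z, sigmoid ((∑ i, p.1 i * z i) + p.2) ∂P₀) -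
        ∫ z, sigmoid ((∑ i, p.1 i * z i) + p.2) ∂P₁|) := by
    refine ⟨P₀.real univ + P₁.real univ, forall_mem_range.mpr fun p => ?_⟩
    simp only [sigmoid_eq_real_sigmoid]
    exact (abs_sub _ _).trans (add_le_add (norm_integral_sigmoid_le P₀ _)
      (norm_integral_sigmoid_le P₁ _))
  have hle := le_ciSup hbdd (θ, b)
  rw [← sigmoidIPM, h] at hle
  exact sub_eq_zero.mp (abs_nonpos_iff.mp hle)

theorem map_sum_mul_eq_of_sigmoidIPM_eq_zero {m : ℕ} {P₀ P₁ : Measure (Fin m → ℝ)}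
    [IsFiniteMeasure P₀] [IsFiniteMeasure P₁] (h : sigmoidIPM P₀ P₁ = 0) (θ : Fin m → ℝ) :
    P₀.map (fun z => ∑ i, θ i * z i) = P₁.map (fun z => ∑ i, θ i * z i) := by
  have hθ : Measurable fun z : Fin m → ℝ => ∑ i, θ i * z i := by fun_prop
  refine Measure.ext_of_integral_sigmoid_eq _ _ fun a b => ?_
  have hσ : Continuous fun x => Real.sigmoid (a * x + b) :=
    continuous_sigmoid.comp (by fun_prop)
  rw [integral_map hθ.aemeasurable hσ.aestronglyMeasurable,
    integral_map hθ.aemeasurable hσ.aestronglyMeasurable]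
  simp_rw [Finset.mul_sum, ← mul_assoc, ← sigmoid_eq_real_sigmoid]
  exact integral_sigmoid_eq_of_sigmoidIPM_eq_zero h (fun i => a * θ i) b

theorem measure_eq_of_sigmoidIPM_eq_zero {m : ℕ} {P₀ P₁ : Measure (Fin m → ℝ)}
    [IsFiniteMeasure P₀] [IsFiniteMeasure P₁] (h : sigmoidIPM P₀ P₁ = 0) : P₀ = P₁ := by
  refine Measure.ext_of_forall_map_strongDual fun L => ?_
  have hL : ⇑L = fun z => ∑ i, L (Pi.single i 1) * z i := by
    funext z
    conv_lhs => rw [pi_eq_sum_univ' z]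
    simp [mul_comm]
  rw [hL]
  exact map_sum_mul_eq_of_sigmoidIPM_eq_zero h _

/-- if the sigmoid IPM of two Borel probability measures on `ℝ^m` is zero,
then every bounded measurable function has equal integrals under the two measures; in
particular, for any prediction model `f` and any `φ : ℝ → ℝ` with `φ ∘ f` bounded and
measurable, the `φ`-fairness `|∫ φ(f z) dP₀ - ∫ φ(f z) dP₁|` equals `0`. -/
theorem integral_eq_of_sigmoidIPM_eq_zero {m : ℕ} (P₀ P₁ : Measure (Fin m → ℝ))
    [IsProbabilityMeasure P₀] [IsProbabilityMeasure P₁]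
    (h : sigmoidIPM P₀ P₁ = 0) :
    (∀ g : (Fin m → ℝ) → ℝ, Measurable g → (∃ C : ℝ, ∀ z, |g z| ≤ C) →
      (∫ z, g z ∂P₀) = ∫ z, g z ∂P₁) ∧
    (∀ (f : (Fin m → ℝ) → ℝ) (φ : ℝ → ℝ), Measurable (φ ∘ f) →
      (∃ C : ℝ, ∀ z, |φ (f z)| ≤ C) →
      |(∫ z, φ (f z) ∂P₀) - ∫ z, φ (f z) ∂P₁| = 0) := by
  obtain rfl : P₀ = P₁ := measure_eq_of_sigmoidIPM_eq_zero h
  exact ⟨fun _ _ _ => rfl, fun _ _ _ _ => by rw [sub_self, abs_zero]⟩
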